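/- Let τ be a renewal process on the nonnegative integers with inter-arrival distribution K(n) = P(τ_1 = n), and let σ be a renewal sequence. For β ≥ 0 define the constrained partition function Z_N = E_τ[exp(β |τ∩σ∩[1,σ_N]|) 1_{σ_N ∈ τ}] and the free partition function Z_N^free = E_τ[exp(β Σ_{n=1}^N 1_{σ_n ∈ τ})]. Suppose there exist K ≥ 1 and c > 0 such that P(τ_1 = k) ≥ c k^{-(2+α)} for all k ≥ K. Then Z_N ≤ Z_N^free ≤ C (σ_N)^{2+α} Z_N for some constant C > 0 depending only on K, c, β, for all sufficiently large N. -/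

import Mathlib

open MeasureTheory ProbabilityTheory Filter
open scoped Classical ENNReal

/-- The renewal set of a renewal process with inter-arrival (gap) sequence `X`:
the set of all partial sums `X 0 + ... + X (m-1)` (including `0`). -/
def renewalSet {Ω : Type*} (X : ℕ → Ω → ℕ) (ω : Ω) : Set ℕ :=
  {n | ∃ m : ℕ, ∑ i ∈ Finset.range m, X i ω = n}

/-- `X` is an i.i.d. sequence of measurable random variables. -/
def IIDGaps {Ω : Type*} [MeasurableSpace Ω] (X : ℕ → Ω → ℕ) (μ : Measure Ω) : Prop :=
  (∀ i, Measurable (X i)) ∧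
  iIndepFun X μ ∧
  (∀ i, Measure.map (X i) μ = Measure.map (X 0) μ)


/-!
Split a free path according to its last renewal `τ_m ≤ σ_N - K`. Since `σ` is strictly
increasing, at most `K` pinning sites lie in `(σ_N - K, σ_N]`, so forgetting the renewals there
costs at most a factor `e^{βK}`. The weight up to `τ_m` is a function of the first `m` gaps, hence
independent of the `m`-th gap, and forcing that gap to land exactly on `σ_N` costs at most a
factor `P(τ₁ = σ_N - τ_m) ≥ c σ_N^{-(2+α)}`. The resulting pinned paths are distinct for distinct
`m`, because `τ_m` is then the renewal immediately before `σ_N`.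
-/

open Finset Function
open scoped ENNReal

namespace Renewal

variable {Ω : Type*}

def renewalEpoch (X : ℕ → Ω → ℕ) (m : ℕ) (ω : Ω) : ℕ :=
  ∑ i ∈ range m, X i ω

-- Indexed by `range m` to match `iIndepFun.indepFun_finset`.
def firstGaps (X : ℕ → Ω → ℕ) (m : ℕ) (ω : Ω) : range m → ℕ :=
  fun i => X i ω

noncomputable def hitCount (X : ℕ → Ω → ℕ) (P : Finset ℕ) (t : ℕ) (ω : Ω) : ℕ :=
  #{p ∈ P | p ≤ t ∧ p ∈ renewalSet X ω}

noncomputable def boltzmannWeight (β : ℝ) (X : ℕ → Ω → ℕ) (P : Finset ℕ) (t : ℕ) (ω : Ω) :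
    ℝ≥0∞ :=
  ENNReal.ofReal (Real.exp (β * hitCount X P t ω))

noncomputable def epochWeight (β : ℝ) (X : ℕ → Ω → ℕ) (P : Finset ℕ) (m : ℕ) (ω : Ω) : ℝ≥0∞ :=
  boltzmannWeight β X P (renewalEpoch X m ω) ω

section Deterministic

variable (X : ℕ → Ω → ℕ) (ω : Ω)

theorem renewalEpoch_succ (m : ℕ) : renewalEpoch X (m + 1) ω = renewalEpoch X m ω + X m ω :=
  sum_range_succ _ _

theorem renewalEpoch_mono : Monotone fun m => renewalEpoch X m ω :=
  fun _ _ h => sum_le_sum_of_subset (range_subset_range.2 h)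

theorem renewalEpoch_congr {ω' : Ω} {m : ℕ} (h : firstGaps X m ω = firstGaps X m ω') {j : ℕ}
    (hj : j ≤ m) : renewalEpoch X j ω = renewalEpoch X j ω' :=
  sum_congr rfl fun i hi => congrFun h ⟨i, mem_range.2 ((mem_range.1 hi).trans_le hj)⟩

theorem exists_last_renewalEpoch_le (L : ℕ) :
    ∃ m, renewalEpoch X m ω ≤ L ∧ ∀ s, renewalEpoch X m ω < s → s ≤ L → s ∉ renewalSet X ω := by
  obtain ⟨m, hm⟩ := Nat.findGreatest_spec (P := (· ∈ renewalSet X ω)) (Nat.zero_le L)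
    ⟨0, sum_range_zero _⟩
  refine ⟨m, ?_, fun s hs hsL => Nat.findGreatest_is_greatest ?_ hsL⟩
  · rw [renewalEpoch, hm]
    exact Nat.findGreatest_le L
  · rwa [renewalEpoch, hm] at hs

theorem eq_of_renewalEpoch_le_of_renewalEpoch_succ_eq {L T m m' : ℕ} (hLT : L < T)
    (hm : renewalEpoch X m ω ≤ L) (hm₁ : renewalEpoch X (m + 1) ω = T)
    (hm' : renewalEpoch X m' ω ≤ L) (hm'₁ : renewalEpoch X (m' + 1) ω = T) : m = m' := by
  by_contra hne
  rcases Nat.lt_or_gt_of_ne hne with h | h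
  · have : renewalEpoch X (m + 1) ω ≤ renewalEpoch X m' ω := renewalEpoch_mono X ω h
    omega
  · have : renewalEpoch X (m' + 1) ω ≤ renewalEpoch X m ω := renewalEpoch_mono X ω h
    omega

variable (P : Finset ℕ)

theorem hitCount_mono {t t' : ℕ} (ht : t ≤ t') : hitCount X P t ω ≤ hitCount X P t' ω :=
  card_le_card fun p hp => by
    simp only [mem_filter] at hp ⊢
    exact ⟨hp.1, hp.2.1.trans ht, hp.2.2⟩

theorem hitCount_le_add_of_forall_notMem {t L : ℕ} (T : ℕ)
    (hgap : ∀ s, t < s → s ≤ L → s ∉ renewalSet X ω) :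
    hitCount X P T ω ≤ hitCount X P t ω + (T - L) :=
  calc hitCount X P T ω ≤ #({p ∈ P | p ≤ t ∧ p ∈ renewalSet X ω} ∪ Ioc L T) := by
        refine card_le_card fun p hp => ?_
        simp only [mem_filter, mem_union, mem_Ioc] at hp ⊢
        rcases le_or_gt p t with hpt | hpt
        · exact Or.inl ⟨hp.1, hpt, hp.2.2⟩
        · exact Or.inr ⟨lt_of_not_ge fun hpL => hgap p hpt hpL hp.2.2, hp.2.1⟩
    _ ≤ hitCount X P t ω + #(Ioc L T) := card_union_le _ _
    _ = hitCount X P t ω + (T - L) := by rw [Nat.card_Ioc]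

theorem hitCount_renewalEpoch (m : ℕ) :
    hitCount X P (renewalEpoch X m ω) ω = #{p ∈ P | ∃ j ≤ m, renewalEpoch X j ω = p} := by
  refine congrArg card (filter_congr fun p _ => ⟨fun ⟨hp, j, hj⟩ => ?_, fun ⟨j, hjm, hj⟩ =>
    ⟨hj ▸ renewalEpoch_mono X ω hjm, j, hj⟩⟩)
  rcases le_or_gt j m with hjm | hjm
  · exact ⟨j, hjm, hj⟩
  · exact ⟨m, le_rfl, le_antisymm (hj ▸ renewalEpoch_mono X ω hjm.le) hp⟩

theorem sum_indicator_eq_hitCount {σ : ℕ → ℕ} (hσ : StrictMono σ) (N : ℕ) :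
    (∑ n ∈ Icc 1 N, if σ n ∈ renewalSet X ω then (1 : ℝ) else 0) =
      hitCount X ((Icc 1 N).image σ) (σ N) ω := by
  rw [hitCount, filter_image, card_image_of_injective _ hσ.injective, sum_boole]
  congr 2
  exact filter_congr fun n hn =>
    (and_iff_right (hσ.monotone (mem_Icc.1 hn).2)).symm

end Deterministic

section Weights

variable {β : ℝ} (hβ : 0 ≤ β) (X : ℕ → Ω → ℕ) (P : Finset ℕ) (ω : Ω)
include hβ

theorem boltzmannWeight_mono {t t' : ℕ} (ht : t ≤ t') :
    boltzmannWeight β X P t ω ≤ boltzmannWeight β X P t' ω :=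
  ENNReal.ofReal_le_ofReal <| Real.exp_le_exp.2 <|
    mul_le_mul_of_nonneg_left (by exact_mod_cast hitCount_mono X ω P ht) hβ

theorem boltzmannWeight_le_mul {t T k : ℕ} (h : hitCount X P T ω ≤ hitCount X P t ω + k) :
    boltzmannWeight β X P T ω ≤
      ENNReal.ofReal (Real.exp (β * k)) * boltzmannWeight β X P t ω := by
  rw [boltzmannWeight, boltzmannWeight, ← ENNReal.ofReal_mul (Real.exp_pos _).le, ← Real.exp_add,
    ← mul_add, add_comm]
  exact ENNReal.ofReal_le_ofReal <| Real.exp_le_exp.2 <|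
    mul_le_mul_of_nonneg_left (by exact_mod_cast h) hβ

theorem boltzmannWeight_le_exp_card (t : ℕ) :
    boltzmannWeight β X P t ω ≤ ENNReal.ofReal (Real.exp (β * #P)) :=
  ENNReal.ofReal_le_ofReal <| Real.exp_le_exp.2 <|
    mul_le_mul_of_nonneg_left (by exact_mod_cast card_filter_le _ _) hβ

end Weights

section Measurability

variable [MeasurableSpace Ω] {X : ℕ → Ω → ℕ} (hX : ∀ i, Measurable (X i))
include hX

theorem measurable_renewalEpoch (m : ℕ) : Measurable (renewalEpoch X m) :=
  Finset.measurable_sum _ fun i _ => hX i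

theorem measurableSet_mem_renewalSet (p : ℕ) : MeasurableSet {ω | p ∈ renewalSet X ω} := by
  rw [show {ω | p ∈ renewalSet X ω} = ⋃ m, {ω | renewalEpoch X m ω = p} by
    ext; simp [renewalSet, renewalEpoch]]
  exact .iUnion fun m => measurableSet_eq_fun (measurable_renewalEpoch hX m) measurable_const

theorem measurable_hitCount (P : Finset ℕ) (t : ℕ) : Measurable (hitCount X P t) := by
  rw [show hitCount X P t = fun ω => ∑ p ∈ P, if p ≤ t ∧ p ∈ renewalSet X ω then 1 else 0 from
    funext fun ω => card_filter _ _]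
  exact Finset.measurable_sum _ fun p _ => Measurable.ite
    ((MeasurableSet.const _).inter (measurableSet_mem_renewalSet hX p)) measurable_const
    measurable_const

theorem measurable_of_factorsThrough_firstGaps {m : ℕ} {F : Ω → ℝ≥0∞}
    (hF : FactorsThrough F (firstGaps X m)) : Measurable F := by
  rw [← hF.extend_comp (0 : (range m → ℕ) → ℝ≥0∞)]
  exact (measurable_of_countable _).comp (measurable_pi_lambda _ fun i => hX i)

end Measurability

section FactorsThrough

variable {X : ℕ → Ω → ℕ} {m : ℕ}

theorem factorsThrough_epochWeight (β : ℝ) (P : Finset ℕ) :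
    FactorsThrough (epochWeight β X P m) (firstGaps X m) := by
  intro ω ω' h
  simp only [epochWeight, boltzmannWeight, hitCount_renewalEpoch]
  congr 5
  exact filter_congr fun p _ => exists_congr fun j =>
    and_congr_right fun hj => by rw [renewalEpoch_congr X ω h hj]

theorem factorsThrough_indicator_renewalEpoch_eq {F : Ω → ℝ≥0∞}
    (hF : FactorsThrough F (firstGaps X m)) (t : ℕ) :
    FactorsThrough ({ω | renewalEpoch X m ω = t}.indicator F) (firstGaps X m) := by
  intro ω ω' h
  simp [Set.indicator, renewalEpoch_congr X ω h le_rfl, hF h]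

end FactorsThrough

section Probability

variable [MeasurableSpace Ω] {μ : Measure Ω} {X : ℕ → Ω → ℕ} (hX : ∀ i, Measurable (X i))
include hX

theorem setLIntegral_gap_eq_measure_mul (hXi : iIndepFun X μ) {m : ℕ} {F : Ω → ℝ≥0∞}
    (hF : FactorsThrough F (firstGaps X m)) (d : ℕ) :
    ∫⁻ ω in {ω | X m ω = d}, F ω ∂μ = μ {ω | X m ω = d} * ∫⁻ ω, F ω ∂μ := by
  set G : Ω → ℝ≥0∞ := {ω | X m ω = d}.indicator 1
  have hd : MeasurableSet {ω | X m ω = d} := hX m (measurableSet_singleton d)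
  have hindep : IndepFun F G μ := by
    rw [← hF.extend_comp (0 : (range m → ℕ) → ℝ≥0∞)]
    exact (hXi.indepFun_finset (range m) {m} (by simp) hX).comp (measurable_of_countable _)
      (measurable_of_countable fun v : ({m} : Finset ℕ) → ℕ =>
        ({d} : Set ℕ).indicator (1 : ℕ → ℝ≥0∞) (v ⟨m, mem_singleton_self m⟩))
  calc ∫⁻ ω in {ω | X m ω = d}, F ω ∂μ = ∫⁻ ω, (F * G) ω ∂μ := by
        rw [← lintegral_indicator hd]
        congr 1 with ω
        by_cases h : X m ω = d <;> simp [G, h]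
    _ = (∫⁻ ω, F ω ∂μ) * μ {ω | X m ω = d} := by
        rw [lintegral_mul_eq_lintegral_mul_lintegral_of_indepFun
          (measurable_of_factorsThrough_firstGaps hX hF) (measurable_one.indicator hd) hindep,
          lintegral_indicator_one hd]
    _ = μ {ω | X m ω = d} * ∫⁻ ω, F ω ∂μ := mul_comm _ _

theorem mul_setLIntegral_le_setLIntegral_renewalEpoch_succ_eq (hXi : iIndepFun X μ)
    {m L T : ℕ} (hLT : L ≤ T) {q : ℝ≥0∞} (hq : ∀ t ≤ L, q ≤ μ {ω | X m ω = T - t})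
    {F : Ω → ℝ≥0∞} (hF : FactorsThrough F (firstGaps X m)) :
    q * ∫⁻ ω in {ω | renewalEpoch X m ω ≤ L}, F ω ∂μ ≤
      ∫⁻ ω in {ω | renewalEpoch X m ω ≤ L ∧ renewalEpoch X (m + 1) ω = T}, F ω ∂μ := by
  set E : ℕ → Set Ω := fun t => {ω | renewalEpoch X m ω = t}
  have hE : ∀ t, MeasurableSet (E t) := fun t =>
    measurable_renewalEpoch hX m (measurableSet_singleton t)
  have hdisj : (range (L + 1) : Set ℕ).PairwiseDisjoint E := fun t _ t' _ htt' =>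
    Set.disjoint_left.2 fun ω h h' => htt' (h.symm.trans h')
  have hsplit : {ω | renewalEpoch X m ω ≤ L} = ⋃ t ∈ range (L + 1), E t := by
    ext ω
    simp [E]
  have hsplit' : {ω | renewalEpoch X m ω ≤ L ∧ renewalEpoch X (m + 1) ω = T} =
      ⋃ t ∈ range (L + 1), E t ∩ {ω | X m ω = T - t} := by
    ext ω
    simp only [Set.mem_ofPred_eq, Set.mem_iUnion, Set.mem_inter_iff, mem_range, renewalEpoch_succ,
      E, exists_prop]
    constructor
    · rintro ⟨hL, hT⟩
      exact ⟨_, by omega, rfl, by omega⟩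
    · rintro ⟨t, ht, rfl, hT⟩
      omega
  rw [hsplit, hsplit', lintegral_biUnion_finset hdisj (fun t _ => hE t),
    lintegral_biUnion_finset (hdisj.mono fun t => Set.inter_subset_left)
      (fun t _ => (hE t).inter (show MeasurableSet {ω | X m ω = T - t} from
        hX m (measurableSet_singleton _))), mul_sum]
  refine sum_le_sum fun t ht => ?_
  rw [← setLIntegral_indicator (hE t), setLIntegral_gap_eq_measure_mul hX hXi
    (factorsThrough_indicator_renewalEpoch_eq hF t), lintegral_indicator (hE t)]
  gcongr
  exact hq t (Nat.lt_succ_iff.1 (mem_range.1 ht))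

variable {β : ℝ} (hβ : 0 ≤ β) (P : Finset ℕ)
include hβ

theorem lintegral_boltzmannWeight_le_tsum (L T : ℕ) :
    ∫⁻ ω, boltzmannWeight β X P T ω ∂μ ≤
      ENNReal.ofReal (Real.exp (β * (T - L : ℕ))) *
        ∑' m, ∫⁻ ω in {ω | renewalEpoch X m ω ≤ L}, epochWeight β X P m ω ∂μ := by
  set e := ENNReal.ofReal (Real.exp (β * (T - L : ℕ)))
  have hE : ∀ m, MeasurableSet {ω | renewalEpoch X m ω ≤ L} := fun m =>
    measurableSet_le (measurable_renewalEpoch hX m) measurable_const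
  have hW : ∀ m, Measurable (epochWeight β X P m) := fun m =>
    measurable_of_factorsThrough_firstGaps hX (factorsThrough_epochWeight β P)
  have hpt : ∀ ω, boltzmannWeight β X P T ω ≤
      ∑' m, e * {ω | renewalEpoch X m ω ≤ L}.indicator (epochWeight β X P m) ω := by
    intro ω
    obtain ⟨m, hmL, hlast⟩ := exists_last_renewalEpoch_le X ω L
    refine (boltzmannWeight_le_mul hβ X P ω
      (hitCount_le_add_of_forall_notMem X ω P T hlast)).trans (le_trans ?_ (ENNReal.le_tsum m))
    rw [Set.indicator_of_mem (show ω ∈ {ω | renewalEpoch X m ω ≤ L} from hmL)]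
    rfl
  calc ∫⁻ ω, boltzmannWeight β X P T ω ∂μ
      ≤ ∫⁻ ω, ∑' m, e * {ω | renewalEpoch X m ω ≤ L}.indicator (epochWeight β X P m) ω ∂μ :=
        lintegral_mono hpt
    _ = ∑' m, ∫⁻ ω, e * {ω | renewalEpoch X m ω ≤ L}.indicator (epochWeight β X P m) ω ∂μ :=
        lintegral_tsum fun m => (((hW m).indicator (hE m)).const_mul e).aemeasurable
    _ = e * ∑' m, ∫⁻ ω in {ω | renewalEpoch X m ω ≤ L}, epochWeight β X P m ω ∂μ := by
        simp_rw [lintegral_const_mul e ((hW _).indicator (hE _)), lintegral_indicator (hE _)]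
        exact ENNReal.tsum_mul_left

theorem tsum_setLIntegral_epochWeight_le {L T : ℕ} (hLT : L < T) :
    ∑' m, ∫⁻ ω in {ω | renewalEpoch X m ω ≤ L ∧ renewalEpoch X (m + 1) ω = T},
        epochWeight β X P m ω ∂μ ≤
      ∫⁻ ω in {ω | T ∈ renewalSet X ω}, boltzmannWeight β X P T ω ∂μ := by
  set D : ℕ → Set Ω := fun m =>
    {ω | renewalEpoch X m ω ≤ L ∧ renewalEpoch X (m + 1) ω = T}
  have hD : ∀ m, MeasurableSet (D m) := fun m =>
    (measurableSet_le (measurable_renewalEpoch hX m) measurable_const).inter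
      (measurableSet_eq_fun (measurable_renewalEpoch hX _) measurable_const)
  have hdisj : Pairwise (Disjoint on D) := fun m m' hmm' =>
    Set.disjoint_left.2 fun ω h h' =>
      hmm' (eq_of_renewalEpoch_le_of_renewalEpoch_succ_eq X ω hLT h.1 h.2 h'.1 h'.2)
  calc ∑' m, ∫⁻ ω in D m, epochWeight β X P m ω ∂μ
      ≤ ∑' m, ∫⁻ ω in D m, boltzmannWeight β X P T ω ∂μ :=
        ENNReal.tsum_le_tsum fun m => setLIntegral_mono' (hD m) fun ω hω =>
          boltzmannWeight_mono hβ X P ω (hω.1.trans hLT.le)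
    _ = ∫⁻ ω in ⋃ m, D m, boltzmannWeight β X P T ω ∂μ := (lintegral_iUnion hD hdisj _).symm
    _ ≤ ∫⁻ ω in {ω | T ∈ renewalSet X ω}, boltzmannWeight β X P T ω ∂μ :=
        lintegral_mono_set (Set.iUnion_subset fun m ω hω => ⟨m + 1, hω.2⟩)

theorem mul_lintegral_boltzmannWeight_le (hXi : iIndepFun X μ) {L T : ℕ} (hLT : L < T)
    {q : ℝ≥0∞} (hq : ∀ m, ∀ t ≤ L, q ≤ μ {ω | X m ω = T - t}) :
    q * ∫⁻ ω, boltzmannWeight β X P T ω ∂μ ≤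
      ENNReal.ofReal (Real.exp (β * (T - L : ℕ))) *
        ∫⁻ ω in {ω | T ∈ renewalSet X ω}, boltzmannWeight β X P T ω ∂μ := by
  set e := ENNReal.ofReal (Real.exp (β * (T - L : ℕ)))
  calc q * ∫⁻ ω, boltzmannWeight β X P T ω ∂μ
      ≤ q * (e * ∑' m, ∫⁻ ω in {ω | renewalEpoch X m ω ≤ L}, epochWeight β X P m ω ∂μ) := by
        gcongr
        exact lintegral_boltzmannWeight_le_tsum hX hβ P L T
    _ = e * ∑' m, q * ∫⁻ ω in {ω | renewalEpoch X m ω ≤ L}, epochWeight β X P m ω ∂μ := by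
        rw [ENNReal.tsum_mul_left, mul_left_comm]
    _ ≤ e * ∑' m, ∫⁻ ω in {ω | renewalEpoch X m ω ≤ L ∧ renewalEpoch X (m + 1) ω = T},
          epochWeight β X P m ω ∂μ := by
        gcongr with m
        exact mul_setLIntegral_le_setLIntegral_renewalEpoch_succ_eq hX hXi hLT.le (hq m)
          (factorsThrough_epochWeight β P)
    _ ≤ e * ∫⁻ ω in {ω | T ∈ renewalSet X ω}, boltzmannWeight β X P T ω ∂μ := by
        gcongr
        exact tsum_setLIntegral_epochWeight_le hX hβ P hLT

end Probability

theorem lintegral_boltzmannWeight_ne_top [MeasurableSpace Ω] (μ : Measure Ω) [IsFiniteMeasure μ]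
    {β : ℝ} (hβ : 0 ≤ β) (X : ℕ → Ω → ℕ) (P : Finset ℕ) (T : ℕ) :
    ∫⁻ ω, boltzmannWeight β X P T ω ∂μ ≠ ⊤ :=
  ne_top_of_le_ne_top
    (by rw [lintegral_const]; exact ENNReal.mul_ne_top ENNReal.ofReal_ne_top (measure_ne_top μ _))
    (lintegral_mono fun ω => boltzmannWeight_le_exp_card hβ X P ω T)

theorem integral_exp_hitCount [MeasurableSpace Ω] {X : ℕ → Ω → ℕ} (hX : ∀ i, Measurable (X i))
    (ν : Measure Ω) (β : ℝ) (P : Finset ℕ) (T : ℕ) :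
    ∫ ω, Real.exp (β * hitCount X P T ω) ∂ν = (∫⁻ ω, boltzmannWeight β X P T ω ∂ν).toReal :=
  integral_eq_lintegral_of_nonneg_ae (Eventually.of_forall fun _ => (Real.exp_pos _).le)
    (Real.measurable_exp.comp
      ((measurable_from_nat.comp (measurable_hitCount hX P T)).const_mul β)).aestronglyMeasurable

theorem integral_exp_hitCount_mul_indicator [MeasurableSpace Ω] {X : ℕ → Ω → ℕ}
    (hX : ∀ i, Measurable (X i)) (ν : Measure Ω) (β : ℝ) (P : Finset ℕ) (T : ℕ) :
    ∫ ω, Real.exp (β * hitCount X P T ω) * (if T ∈ renewalSet X ω then 1 else 0) ∂ν =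
      (∫⁻ ω in {ω | T ∈ renewalSet X ω}, boltzmannWeight β X P T ω ∂ν).toReal := by
  rw [← integral_exp_hitCount hX, ← integral_indicator (measurableSet_mem_renewalSet hX T)]
  congr 1 with ω
  by_cases h : T ∈ renewalSet X ω <;> simp [h]

end Renewal

theorem IIDGaps.measure_eq {Ω : Type*} [MeasurableSpace Ω] {X : ℕ → Ω → ℕ} {μ : Measure Ω}
    (hX : IIDGaps X μ) (m d : ℕ) : μ {ω | X m ω = d} = μ {ω | X 0 ω = d} := by
  have h := congrArg (· {d}) (hX.2.2 m)
  simp only [Measure.map_apply (hX.1 _) (measurableSet_singleton d)] at h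
  exact h

theorem IIDGaps.ofReal_mul_rpow_le_measure {Ω : Type*} [MeasurableSpace Ω] {X : ℕ → Ω → ℕ}
    {μ : Measure Ω} (hX : IIDGaps X μ) {K T : ℕ} (hK : 1 ≤ K) (hKT : K ≤ T) {c α : ℝ}
    (hc : 0 ≤ c) (hα : 0 ≤ α)
    (hgap : ∀ k : ℕ, K ≤ k → c * (k : ℝ) ^ (-(2 + α)) ≤ (μ {ω | X 0 ω = k}).toReal)
    (m : ℕ) {t : ℕ} (ht : t ≤ T - K) :
    ENNReal.ofReal (c * (T : ℝ) ^ (-(2 + α))) ≤ μ {ω | X m ω = T - t} := by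
  rw [hX.measure_eq]
  refine ENNReal.ofReal_le_of_le_toReal (le_trans ?_ (hgap (T - t) (by omega)))
  gcongr c * ?_
  exact Real.rpow_le_rpow_of_nonpos (by exact_mod_cast (by omega : 0 < T - t))
    (by exact_mod_cast Nat.sub_le T t) (by linarith)

open Renewal

theorem stmt1_general {Ω : Type*} [MeasurableSpace Ω] (μ : Measure Ω) [IsProbabilityMeasure μ]
    (X : ℕ → Ω → ℕ) (hX : IIDGaps X μ)
    (σ : ℕ → ℕ) (hσmono : StrictMono σ)
    (α : ℝ) (hα : 0 ≤ α)
    (K : ℕ) (hK : 1 ≤ K) (c : ℝ) (hc : 0 < c)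
    (hgap : ∀ k : ℕ, K ≤ k → c * (k : ℝ) ^ (-(2 + α)) ≤ (μ {ω | X 0 ω = k}).toReal)
    (β : ℝ) (hβ : 0 ≤ β) :
    ∃ C > (0 : ℝ), ∃ N₀ : ℕ, ∀ N : ℕ, N₀ ≤ N →
      (∫ ω, Real.exp (β * ∑ n ∈ Finset.Icc 1 N,
          (if σ n ∈ renewalSet X ω then (1 : ℝ) else 0)) *
          (if σ N ∈ renewalSet X ω then (1 : ℝ) else 0) ∂μ)
        ≤ (∫ ω, Real.exp (β * ∑ n ∈ Finset.Icc 1 N,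
          (if σ n ∈ renewalSet X ω then (1 : ℝ) else 0)) ∂μ) ∧
      (∫ ω, Real.exp (β * ∑ n ∈ Finset.Icc 1 N,
          (if σ n ∈ renewalSet X ω then (1 : ℝ) else 0)) ∂μ)
        ≤ C * (σ N : ℝ) ^ ((2 : ℝ) + α) *
          (∫ ω, Real.exp (β * ∑ n ∈ Finset.Icc 1 N,
            (if σ n ∈ renewalSet X ω then (1 : ℝ) else 0)) *
            (if σ N ∈ renewalSet X ω then (1 : ℝ) else 0) ∂μ) := by
  refine ⟨Real.exp (β * K) / c, by positivity, K, fun N hN => ?_⟩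
  simp only [sum_indicator_eq_hitCount _ _ hσmono N]
  rw [integral_exp_hitCount_mul_indicator hX.1, integral_exp_hitCount hX.1]
  set T := σ N
  set P := (Finset.Icc 1 N).image σ
  have hKT : K ≤ T := hN.trans hσmono.le_apply
  have hT : 0 < (T : ℝ) := by exact_mod_cast (by omega : 0 < T)
  set Zf := ∫⁻ ω, boltzmannWeight β X P T ω ∂μ
  set Zp := ∫⁻ ω in {ω | T ∈ renewalSet X ω}, boltzmannWeight β X P T ω ∂μ
  have hZf : Zf ≠ ⊤ := lintegral_boltzmannWeight_ne_top μ hβ X P T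
  have hZp : Zp ≤ Zf := setLIntegral_le_lintegral _ _
  have key := mul_lintegral_boltzmannWeight_le hX.1 hβ P hX.2.1 (show T - K < T by omega)
    fun m t ht => hX.ofReal_mul_rpow_le_measure hK hKT hc.le hα hgap m ht
  rw [Nat.sub_sub_self hKT, Real.rpow_neg (Nat.cast_nonneg T)] at key
  have key' := ENNReal.toReal_mono
    (ENNReal.mul_ne_top ENNReal.ofReal_ne_top (ne_top_of_le_ne_top hZf hZp)) key
  rw [ENNReal.toReal_mul, ENNReal.toReal_mul, ENNReal.toReal_ofReal (by positivity),
    ENNReal.toReal_ofReal (by positivity)] at key'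
  refine ⟨ENNReal.toReal_mono hZf hZp, ?_⟩
  calc Zf.toReal = (c * ((T : ℝ) ^ ((2 : ℝ) + α))⁻¹)⁻¹ *
        (c * ((T : ℝ) ^ ((2 : ℝ) + α))⁻¹ * Zf.toReal) := by field_simp
    _ ≤ (c * ((T : ℝ) ^ ((2 : ℝ) + α))⁻¹)⁻¹ * (Real.exp (β * K) * Zp.toReal) := by gcongr
    _ = Real.exp (β * K) / c * (T : ℝ) ^ ((2 : ℝ) + α) * Zp.toReal := by field_simp

/-- **Comparison of free and constrained partition functions.**
Let `τ` be a renewal process with i.i.d. gaps `X` whose gap distribution satisfies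
`P(τ₁ = k) ≥ c k^{-(2+α)}` for all `k ≥ K`, and let `σ` be a fixed increasing sequence
of positive integers. For `β ≥ 0`, with
`Z N = E[exp(β #{n ∈ [1,N] : σ_n ∈ τ}) 1_{σ_N ∈ τ}]` and
`Z^free N = E[exp(β #{n ∈ [1,N] : σ_n ∈ τ})]`, there is a constant `C > 0` such that for
all large `N`, `Z N ≤ Z^free N ≤ C (σ_N)^{2+α} Z N`. -/
theorem stmt1 {Ω : Type*} [MeasurableSpace Ω] (μ : Measure Ω) [IsProbabilityMeasure μ]
    (X : ℕ → Ω → ℕ) (hX : IIDGaps X μ)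
    (σ : ℕ → ℕ) (hσmono : StrictMono σ) (hσpos : 0 < σ 1)
    (α : ℝ) (hα : 0 ≤ α)
    (K : ℕ) (hK : 1 ≤ K) (c : ℝ) (hc : 0 < c)
    (hgap : ∀ k : ℕ, K ≤ k → c * (k : ℝ) ^ (-(2 + α)) ≤ (μ {ω | X 0 ω = k}).toReal)
    (β : ℝ) (hβ : 0 ≤ β) :
    ∃ C > (0 : ℝ), ∃ N₀ : ℕ, ∀ N : ℕ, N₀ ≤ N →
      (∫ ω, Real.exp (β * ∑ n ∈ Finset.Icc 1 N,
          (if σ n ∈ renewalSet X ω then (1 : ℝ) else 0)) *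
          (if σ N ∈ renewalSet X ω then (1 : ℝ) else 0) ∂μ)
        ≤ (∫ ω, Real.exp (β * ∑ n ∈ Finset.Icc 1 N,
          (if σ n ∈ renewalSet X ω then (1 : ℝ) else 0)) ∂μ) ∧
      (∫ ω, Real.exp (β * ∑ n ∈ Finset.Icc 1 N,
          (if σ n ∈ renewalSet X ω then (1 : ℝ) else 0)) ∂μ)
        ≤ C * (σ N : ℝ) ^ ((2 : ℝ) + α) *
          (∫ ω, Real.exp (β * ∑ n ∈ Finset.Icc 1 N,
            (if σ n ∈ renewalSet X ω then (1 : ℝ) else 0)) *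
            (if σ N ∈ renewalSet X ω then (1 : ℝ) else 0) ∂μ) :=
  stmt1_general μ X hX σ hσmono α hα K hK c hc hgap β hβ
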